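/- arXiv:1809.08837 — 4 statements merged into one kernel-verified Lean document; each statement's English description precedes it below -/
import Mathlib

section
/- Let v be a nonnegative random variable with values in [0,1] and let b⁻ be an independent nonnegative random variable with density g. For linear bids b(v) = α·v, the CPA (the ratio of expected cost to expected value) is non-decreasing in the bid multiplier: for 0 < α₁ ≤ α₂, E[b⁻·1{b⁻ < α₁v}] / E[v·1{b⁻ < α₁v}] ≤ E[b⁻·1{b⁻ < α₂v}] / E[v·1{b⁻ < α₂v}], whenever both denominators are positive. -/
/-!
On the win set of the bid `α₁ v` the price paid is below `α₁ v`, so the CPA at `α₁` is at most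
`α₁`. Raising the multiplier to `α₂` only adds outcomes with `α₁ v ≤ b⁻`, whose marginal CPA is
therefore at least `α₁`. The CPA at `α₂` is the mediant of these two ratios, hence at least the
CPA at `α₁`.
-/

open MeasureTheory ProbabilityTheory Set

theorem div_le_div_of_le_mul_of_mul_sub_le {N₁ N₂ D₁ D₂ c : ℝ} (hD₁ : 0 < D₁) (hD : D₁ ≤ D₂)
    (hN₁ : N₁ ≤ c * D₁) (hN : c * (D₂ - D₁) ≤ N₂ - N₁) : N₁ / D₁ ≤ N₂ / D₂ := by
  rw [div_le_div_iff₀ hD₁ (hD₁.trans_le hD)]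
  nlinarith [mul_le_mul_of_nonneg_right hN₁ (sub_nonneg.2 hD),
    mul_le_mul_of_nonneg_right hN hD₁.le]

section WinSet

variable {Ω : Type*} [MeasurableSpace Ω] {μ : Measure Ω} {v bm : Ω → ℝ}

noncomputable def expectedCost (μ : Measure Ω) (v bm : Ω → ℝ) (α : ℝ) : ℝ :=
  ∫ ω, (if bm ω < α * v ω then bm ω else 0) ∂μ

noncomputable def expectedWonValue (μ : Measure Ω) (v bm : Ω → ℝ) (α : ℝ) : ℝ :=
  ∫ ω, (if bm ω < α * v ω then v ω else 0) ∂μ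

theorem integrable_ite_lt_mul_value [IsFiniteMeasure μ] (hv : Measurable v) (hbm : Measurable bm)
    (hv01 : ∀ ω, v ω ∈ Icc (0 : ℝ) 1) (α : ℝ) :
    Integrable (fun ω => if bm ω < α * v ω then v ω else 0) μ := by
  refine .of_bound (Measurable.ite (measurableSet_lt hbm (hv.const_mul α)) hv
    measurable_const).aestronglyMeasurable 1 (ae_of_all _ fun ω => ?_)
  have := hv01 ω
  split_ifs <;> simp [abs_of_nonneg this.1, this.2]

theorem integrable_ite_lt_mul_price [IsFiniteMeasure μ] (hv : Measurable v)
    (hbm : Measurable bm) (hv01 : ∀ ω, v ω ∈ Icc (0 : ℝ) 1) (hbm0 : ∀ ω, 0 ≤ bm ω) (α : ℝ) :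
    Integrable (fun ω => if bm ω < α * v ω then bm ω else 0) μ := by
  refine .of_bound (Measurable.ite (measurableSet_lt hbm (hv.const_mul α)) hbm
    measurable_const).aestronglyMeasurable |α| (ae_of_all _ fun ω => ?_)
  obtain ⟨hv0, hv1⟩ := hv01 ω
  split_ifs with hwin
  · rw [Real.norm_of_nonneg (hbm0 ω)]
    calc bm ω ≤ α * v ω := hwin.le
      _ ≤ |α| * 1 := by nlinarith [le_abs_self α, abs_nonneg α]
      _ = |α| := mul_one _
  · simp

theorem expectedCost_le_mul_expectedWonValue [IsFiniteMeasure μ] (hv : Measurable v)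
    (hbm : Measurable bm) (hv01 : ∀ ω, v ω ∈ Icc (0 : ℝ) 1) (hbm0 : ∀ ω, 0 ≤ bm ω) (α : ℝ) :
    expectedCost μ v bm α ≤ α * expectedWonValue μ v bm α := by
  rw [expectedWonValue, ← integral_const_mul]
  refine integral_mono (integrable_ite_lt_mul_price hv hbm hv01 hbm0 α)
    ((integrable_ite_lt_mul_value hv hbm hv01 α).const_mul α) fun ω => ?_
  split_ifs with hwin
  · exact hwin.le
  · simp

theorem lt_mul_of_lt_mul_of_le {α₁ α₂ : ℝ} (h12 : α₁ ≤ α₂) {b x : ℝ} (hx : 0 ≤ x)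
    (h : b < α₁ * x) : b < α₂ * x :=
  h.trans_le (mul_le_mul_of_nonneg_right h12 hx)

theorem expectedWonValue_mono [IsFiniteMeasure μ] (hv : Measurable v) (hbm : Measurable bm)
    (hv01 : ∀ ω, v ω ∈ Icc (0 : ℝ) 1) : Monotone (expectedWonValue μ v bm) := by
  intro α₁ α₂ h12
  refine integral_mono (integrable_ite_lt_mul_value hv hbm hv01 α₁)
    (integrable_ite_lt_mul_value hv hbm hv01 α₂) fun ω => ?_
  have hv0 := (hv01 ω).1
  dsimp only
  split_ifs with hwin₁ hwin₂ hwin₂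
  · rfl
  · exact absurd (lt_mul_of_lt_mul_of_le h12 hv0 hwin₁) hwin₂
  · exact hv0
  · rfl

theorem mul_sub_expectedWonValue_le_sub_expectedCost [IsFiniteMeasure μ] (hv : Measurable v)
    (hbm : Measurable bm) (hv01 : ∀ ω, v ω ∈ Icc (0 : ℝ) 1) (hbm0 : ∀ ω, 0 ≤ bm ω)
    {α₁ α₂ : ℝ} (h12 : α₁ ≤ α₂) :
    α₁ * (expectedWonValue μ v bm α₂ - expectedWonValue μ v bm α₁)
      ≤ expectedCost μ v bm α₂ - expectedCost μ v bm α₁ := by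
  have hval := integrable_ite_lt_mul_value (μ := μ) hv hbm hv01
  have hcost := integrable_ite_lt_mul_price (μ := μ) hv hbm hv01 hbm0
  rw [expectedWonValue, expectedWonValue, expectedCost, expectedCost,
    ← integral_sub (hval α₂) (hval α₁), ← integral_sub (hcost α₂) (hcost α₁),
    ← integral_const_mul]
  refine integral_mono (((hval α₂).sub (hval α₁)).const_mul α₁)
    ((hcost α₂).sub (hcost α₁)) fun ω => ?_
  have hv0 := (hv01 ω).1
  dsimp only
  split_ifs with hwin₂ hwin₁ hwin₁
  · simp
  · rw [sub_zero, sub_zero]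
    exact not_lt.1 hwin₁
  · exact absurd (lt_mul_of_lt_mul_of_le h12 hv0 hwin₁) hwin₂
  · simp

end WinSet

theorem cpa_monotone_in_bid_multiplier_general
    {Ω : Type*} [MeasureSpace Ω] [IsProbabilityMeasure (ℙ : Measure Ω)]
    (v bm : Ω → ℝ) (hv : Measurable v) (hbm : Measurable bm)
    (hv01 : ∀ ω, v ω ∈ Icc (0:ℝ) 1) (hbm0 : ∀ ω, 0 ≤ bm ω)
    (α₁ α₂ : ℝ) (h12 : α₁ ≤ α₂)
    (hd1 : 0 < ∫ ω, (if bm ω < α₁ * v ω then v ω else 0) ∂ℙ) :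
    (∫ ω, (if bm ω < α₁ * v ω then bm ω else 0) ∂ℙ)
        / (∫ ω, (if bm ω < α₁ * v ω then v ω else 0) ∂ℙ)
      ≤ (∫ ω, (if bm ω < α₂ * v ω then bm ω else 0) ∂ℙ)
        / (∫ ω, (if bm ω < α₂ * v ω then v ω else 0) ∂ℙ) :=
  div_le_div_of_le_mul_of_mul_sub_le hd1 (expectedWonValue_mono hv hbm hv01 h12)
    (expectedCost_le_mul_expectedWonValue hv hbm hv01 hbm0 α₁)
    (mul_sub_expectedWonValue_le_sub_expectedCost hv hbm hv01 hbm0 h12)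

/-- **CPA monotony.** For a value `v ∈ [0,1]` and an independent nonnegative
price to beat `bm` with density `g`, when the buyer bids linearly `b(v) = α·v`
the CPA (ratio of expected payment to expected earned value) is non-decreasing
in the bid multiplier `α`, whenever both denominators are positive. -/
theorem cpa_monotone_in_bid_multiplier
    {Ω : Type*} [MeasureSpace Ω] [IsProbabilityMeasure (ℙ : Measure Ω)]
    (v bm : Ω → ℝ) (hv : Measurable v) (hbm : Measurable bm)
    (hv01 : ∀ ω, v ω ∈ Icc (0:ℝ) 1) (hbm0 : ∀ ω, 0 ≤ bm ω)
    (hindep : IndepFun v bm ℙ)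
    (g : ℝ → ℝ)
    (hdens : (ℙ : Measure Ω).map bm = volume.withDensity (fun x => ENNReal.ofReal (g x)))
    (α₁ α₂ : ℝ) (h1 : 0 < α₁) (h12 : α₁ ≤ α₂)
    (hd1 : 0 < ∫ ω, (if bm ω < α₁ * v ω then v ω else 0) ∂ℙ)
    (hd2 : 0 < ∫ ω, (if bm ω < α₂ * v ω then v ω else 0) ∂ℙ) :
    (∫ ω, (if bm ω < α₁ * v ω then bm ω else 0) ∂ℙ)
        / (∫ ω, (if bm ω < α₁ * v ω then v ω else 0) ∂ℙ)
      ≤ (∫ ω, (if bm ω < α₂ * v ω then bm ω else 0) ∂ℙ)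
        / (∫ ω, (if bm ω < α₂ * v ω then v ω else 0) ∂ℙ) :=
  cpa_monotone_in_bid_multiplier_general v bm hv hbm hv01 hbm0 α₁ α₂ h12 hd1
end

section
/- Let v₁, …, vₙ (n ≥ 2) be i.i.d. nonnegative random variables with common atomless distribution F and finite expectation, let v = vₙ and Y = max(v₁, …, vₙ₋₁), and let Mₖ denote the maximum of k i.i.d. draws from F. Then E[Y·1{v > Y}] = E[Mₙ₋₁] − ((n−1)/n)·E[Mₙ]. -/
/-!
Pointwise `Y·1{Y < v} = Y + v·1{Y < v} − max v Y`, and `max v Y = M`. The middle term is the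
winning bid of the last bidder. Almost surely the values are pairwise distinct (they are
independent and atomless), and then the winning bids of all `n` bidders add up to `M`; since an
i.i.d. vector is exchangeable, every bidder has the same expected winning bid, so
`E[v·1{Y < v}] = E[M] / n`.
-/

open MeasureTheory ProbabilityTheory Set Finset Function

section Bids

lemma measurable_fold_max {ι : Type*} [DecidableEq ι] (s : Finset ι) :
    Measurable fun x : ι → ℝ => s.fold max 0 x := by
  induction s using Finset.induction_on with
  | empty => exact measurable_const
  | insert a s ha ih => simpa only [fold_insert ha] using (measurable_pi_apply a).max ih

variable {ι : Type*} [Fintype ι] [DecidableEq ι]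

noncomputable def winningBid (i : ι) (x : ι → ℝ) : ℝ :=
  if (univ.erase i).fold max 0 x < x i then x i else 0

lemma fold_max_univ_eq_max_erase (x : ι → ℝ) (i : ι) :
    univ.fold max 0 x = max (x i) ((univ.erase i).fold max 0 x) := by
  rw [← insert_erase (mem_univ i), fold_insert (notMem_erase i _), insert_erase (mem_univ i)]

lemma measurable_winningBid (i : ι) : Measurable (winningBid i) :=
  Measurable.ite (measurableSet_lt (measurable_fold_max _) (measurable_pi_apply i))
    (measurable_pi_apply i) measurable_const

lemma norm_winningBid_le (i : ι) (x : ι → ℝ) : ‖winningBid i x‖ ≤ ‖x i‖ := by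
  unfold winningBid; split_ifs <;> simp

lemma winningBid_comp_perm (σ : Equiv.Perm ι) (i : ι) (x : ι → ℝ) :
    winningBid i (fun k => x (σ k)) = winningBid (σ i) x := by
  have : (univ.erase i).image σ = univ.erase (σ i) := by
    rw [image_erase σ.injective, image_univ_equiv]
  simp only [winningBid, ← this, fold_image σ.injective.injOn, comp_apply]

lemma winningBid_eq_zero_of_le {x : ι → ℝ} {i j : ι} (hij : j ≠ i) (hi : x j ≤ x i) :
    winningBid j x = 0 :=
  if_neg <| not_lt.2 <| hi.trans <|
    (le_fold_max _).2 <| Or.inr ⟨i, mem_erase.2 ⟨hij.symm, mem_univ i⟩, le_rfl⟩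

/-- When the highest bid is not positive nobody wins, but then the maximum truncated at `0`
vanishes too. -/
theorem sum_winningBid_of_injective {x : ι → ℝ} (hx : Injective x) :
    ∑ i, winningBid i x = univ.fold max 0 x := by
  rcases isEmpty_or_nonempty ι with hι | hι
  · simp
  obtain ⟨i, -, hi⟩ := exists_max_image univ x univ_nonempty
  have hlt : ∀ j ∈ univ.erase i, x j < x i := fun j hj =>
    (hi j (mem_univ j)).lt_of_ne (hx.ne (mem_erase.1 hj).1)
  rw [sum_eq_single i (fun j _ hj => winningBid_eq_zero_of_le hj (hi j (mem_univ j)))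
    (by simp), fold_max_univ_eq_max_erase x i, winningBid]
  split_ifs with hwin
  · exact (max_eq_left hwin.le).symm
  · have hnonpos : x i ≤ 0 := not_lt.1 fun hpos => hwin ((fold_max_lt _).2 ⟨hpos, hlt⟩)
    have hzero : (univ.erase i).fold max 0 x = 0 :=
      le_antisymm ((fold_max_le _).2 ⟨le_rfl, fun j hj => (hlt j hj).le.trans hnonpos⟩)
        ((le_fold_max _).2 (Or.inl le_rfl))
    rw [hzero, max_eq_right hnonpos]

end Bids

lemma ite_lt_eq_add_ite_sub_max (y a : ℝ) :
    (if y < a then y else 0) = y + (if y < a then a else 0) - max a y := by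
  split_ifs with h
  · rw [max_eq_left h.le]; ring
  · rw [max_eq_right (not_lt.1 h)]; ring

section Integrability

variable {Ω ι : Type*} [MeasurableSpace Ω] {μ : Measure Ω} [DecidableEq ι]
  {v : ι → Ω → ℝ}

lemma integrable_winningBid [Fintype ι] (hmeas : ∀ i, Measurable (v i))
    (hint : ∀ i, Integrable (v i) μ) (i : ι) :
    Integrable (fun ω => winningBid i fun j => v j ω) μ :=
  (hint i).mono
    ((measurable_winningBid i).comp (measurable_pi_lambda _ hmeas)).aestronglyMeasurable
    (ae_of_all _ fun _ => norm_winningBid_le i _)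

lemma integrable_fold_max [IsFiniteMeasure μ] (hint : ∀ i, Integrable (v i) μ) (s : Finset ι) :
    Integrable (fun ω => s.fold max 0 fun i => v i ω) μ := by
  induction s using Finset.induction_on with
  | empty => exact integrable_const 0
  | insert a s ha ih =>
    simp only [fold_insert ha]
    exact (hint a).sup ih

end Integrability

namespace ProbabilityTheory

variable {Ω ι : Type*} [MeasurableSpace Ω] {μ : Measure Ω}

lemma IndepFun.measure_eq_eq_zero [IsFiniteMeasure μ] {f g : Ω → ℝ} (hf : Measurable f)
    (hg : Measurable g) (h : IndepFun f g μ) (hg0 : ∀ x, μ {ω | g ω = x} = 0) :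
    μ {ω | f ω = g ω} = 0 := by
  have hdiag : MeasurableSet {p : ℝ × ℝ | p.1 = p.2} :=
    measurableSet_eq_fun measurable_fst measurable_snd
  have hatom : ∀ x, μ.map g {x} = 0 := fun x => by
    rw [Measure.map_apply hg (measurableSet_singleton x)]
    exact hg0 x
  change μ ((fun ω => (f ω, g ω)) ⁻¹' {p : ℝ × ℝ | p.1 = p.2}) = 0
  rw [← Measure.map_apply (hf.prodMk hg) hdiag,
    (indepFun_iff_map_prod_eq_prod_map_map hf.aemeasurable hg.aemeasurable).1 h,
    Measure.prod_apply hdiag]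
  simp [hatom]

variable {v : ι → Ω → ℝ}

lemma iIndepFun.ae_injective [IsFiniteMeasure μ] [Countable ι] (hmeas : ∀ i, Measurable (v i))
    (hindep : iIndepFun v μ) (hatomless : ∀ i x, μ {ω | v i ω = x} = 0) :
    ∀ᵐ ω ∂μ, Injective fun i => v i ω := by
  have hpair : ∀ i j, i ≠ j → ∀ᵐ ω ∂μ, v i ω ≠ v j ω := fun i j hij =>
    measure_eq_zero_iff_ae_notMem.1
      (IndepFun.measure_eq_eq_zero (hmeas i) (hmeas j) (hindep.indepFun hij) (hatomless j))
  have : ∀ᵐ ω ∂μ, ∀ i j, i ≠ j → v i ω ≠ v j ω := by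
    simp only [ae_all_iff]
    exact hpair
  exact this.mono fun ω h i j => not_imp_not.1 (h i j)

lemma iIndepFun.identDistrib_comp_perm [Fintype ι] (hmeas : ∀ i, Measurable (v i))
    (hindep : iIndepFun v μ) (hid : ∀ i j, IdentDistrib (v i) (v j) μ μ) (σ : Equiv.Perm ι) :
    IdentDistrib (fun ω i => v (σ i) ω) (fun ω i => v i ω) μ μ where
  aemeasurable_fst := (measurable_pi_lambda _ fun i => hmeas (σ i)).aemeasurable
  aemeasurable_snd := (measurable_pi_lambda _ hmeas).aemeasurable
  map_eq := by
    rw [(hindep.precomp σ.injective).map_fun_eq_pi_map fun i => (hmeas (σ i)).aemeasurable,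
      hindep.map_fun_eq_pi_map fun i => (hmeas i).aemeasurable]
    exact congrArg Measure.pi (funext fun i => (hid (σ i) i).map_eq)

variable [Fintype ι] [DecidableEq ι]

lemma iIndepFun.integral_winningBid_eq (hmeas : ∀ i, Measurable (v i)) (hindep : iIndepFun v μ)
    (hid : ∀ i j, IdentDistrib (v i) (v j) μ μ) (i j : ι) :
    ∫ ω, winningBid i (fun k => v k ω) ∂μ
      = ∫ ω, winningBid j (fun k => v k ω) ∂μ := by
  have h := ((hindep.identDistrib_comp_perm hmeas hid (Equiv.swap j i)).comp
    (measurable_winningBid j)).integral_eq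
  simp only [comp_def] at h
  rw [← h]
  congr 1 with ω
  rw [winningBid_comp_perm (Equiv.swap j i) j fun k => v k ω, Equiv.swap_apply_left]

theorem iIndepFun.integral_fold_max_eq_card_mul [IsFiniteMeasure μ]
    (hmeas : ∀ i, Measurable (v i)) (hindep : iIndepFun v μ)
    (hid : ∀ i j, IdentDistrib (v i) (v j) μ μ) (hatomless : ∀ i x, μ {ω | v i ω = x} = 0)
    (hint : ∀ i, Integrable (v i) μ) (j : ι) :
    ∫ ω, univ.fold max 0 (fun i => v i ω) ∂μ
      = Fintype.card ι * ∫ ω, winningBid j (fun i => v i ω) ∂μ := by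
  calc ∫ ω, univ.fold max 0 (fun i => v i ω) ∂μ
      = ∫ ω, ∑ i, winningBid i (fun k => v k ω) ∂μ :=
        integral_congr_ae <| (hindep.ae_injective hmeas hatomless).mono fun ω hω =>
          (sum_winningBid_of_injective hω).symm
    _ = ∑ i, ∫ ω, winningBid i (fun k => v k ω) ∂μ :=
        integral_finsetSum _ fun i _ => integrable_winningBid hmeas hint i
    _ = Fintype.card ι * ∫ ω, winningBid j (fun i => v i ω) ∂μ := by
        simp only [hindep.integral_winningBid_eq hmeas hid _ j, sum_const, card_univ, nsmul_eq_mul]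

end ProbabilityTheory

theorem expected_payment_eq_order_statistics_general
    {Ω : Type*} [MeasureSpace Ω] [IsProbabilityMeasure (ℙ : Measure Ω)]
    (m : ℕ)
    (v : Fin (m + 1) → Ω → ℝ)
    (hmeas : ∀ i, Measurable (v i))
    (hindep : iIndepFun v ℙ)
    (hid : ∀ i j, IdentDistrib (v i) (v j) ℙ ℙ)
    (hatomless : ∀ i (x : ℝ), ℙ {ω | v i ω = x} = 0)
    (hint : ∀ i, Integrable (v i) ℙ)
    (Y M : Ω → ℝ)
    (hY : ∀ ω, Y ω = (Finset.univ.erase (Fin.last m)).fold max 0 (fun i => v i ω))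
    (hM : ∀ ω, M ω = Finset.univ.fold max 0 (fun i => v i ω)) :
    (∫ ω, (if Y ω < v (Fin.last m) ω then Y ω else 0) ∂ℙ)
      = (∫ ω, Y ω ∂ℙ) - ((m : ℝ) / (m + 1)) * ∫ ω, M ω ∂ℙ := by
  set W := fun ω => winningBid (Fin.last m) fun i => v i ω
  have hpointwise :
      ∀ ω, (if Y ω < v (Fin.last m) ω then Y ω else 0) = Y ω + W ω - M ω := by
    intro ω
    simp only [W, winningBid, hM, fold_max_univ_eq_max_erase _ (Fin.last m), ← hY]
    exact ite_lt_eq_add_ite_sub_max _ _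
  have hYint : Integrable Y ℙ := by
    simpa only [← hY] using integrable_fold_max hint (univ.erase (Fin.last m))
  have hMint : Integrable M ℙ := by simpa only [← hM] using integrable_fold_max hint univ
  have hWint : Integrable W ℙ := integrable_winningBid hmeas hint _
  have hEM : ∫ ω, M ω ∂ℙ = (m + 1) * ∫ ω, W ω ∂ℙ := by
    simpa only [← hM, Fintype.card_fin, Nat.cast_add, Nat.cast_one] using
      hindep.integral_fold_max_eq_card_mul hmeas hid hatomless hint (Fin.last m)
  calc ∫ ω, (if Y ω < v (Fin.last m) ω then Y ω else 0) ∂ℙ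
      = ∫ ω, (Y ω + W ω) - M ω ∂ℙ := by simp only [hpointwise]
    _ = (∫ ω, Y ω ∂ℙ) + (∫ ω, W ω ∂ℙ) - ∫ ω, M ω ∂ℙ := by
        rw [integral_sub (f := fun ω => Y ω + W ω) (hYint.add hWint) hMint,
          integral_add hYint hWint]
    _ = (∫ ω, Y ω ∂ℙ) - ((m : ℝ) / (m + 1)) * ∫ ω, M ω ∂ℙ := by
        rw [hEM]
        field_simp
        ring

/-- **Expected second-price payment at a symmetric profile.**  For `n = m + 1 ≥ 2`
i.i.d. nonnegative values with an atomless common distribution and finite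
expectation, with `v` the last value, `Y` the maximum of the other `n − 1`
values (so `E[Y] = E[Mₙ₋₁]`) and `M` the maximum of all `n` values
(so `E[M] = E[Mₙ]`), one has `E[Y·1{v > Y}] = E[Mₙ₋₁] − ((n−1)/n)·E[Mₙ]`. -/
theorem expected_payment_eq_order_statistics
    {Ω : Type*} [MeasureSpace Ω] [IsProbabilityMeasure (ℙ : Measure Ω)]
    (m : ℕ) (hm : 1 ≤ m)
    (v : Fin (m + 1) → Ω → ℝ)
    (hmeas : ∀ i, Measurable (v i))
    (hnn : ∀ i ω, 0 ≤ v i ω)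
    (hindep : iIndepFun v ℙ)
    (hid : ∀ i j, IdentDistrib (v i) (v j) ℙ ℙ)
    (hatomless : ∀ i (x : ℝ), ℙ {ω | v i ω = x} = 0)
    (hint : ∀ i, Integrable (v i) ℙ)
    (Y M : Ω → ℝ)
    (hY : ∀ ω, Y ω = (Finset.univ.erase (Fin.last m)).fold max 0 (fun i => v i ω))
    (hM : ∀ ω, M ω = Finset.univ.fold max 0 (fun i => v i ω)) :
    (∫ ω, (if Y ω < v (Fin.last m) ω then Y ω else 0) ∂ℙ)
      = (∫ ω, Y ω ∂ℙ) - ((m : ℝ) / (m + 1)) * ∫ ω, M ω ∂ℙ :=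
  expected_payment_eq_order_statistics_general m v hmeas hindep hid hatomless hint Y M hY hM
end

section
/- Fix κ ∈ [0,1], let S(b, b⁻) = (1−κ)·b + κ·b⁻, let b̂⁻ be a nonnegative random variable, w ≥ 0, and c > 0. If b̂ maximizes the function b ↦ E[(w − S(b, b̂⁻))·1{b > b̂⁻}] over b ∈ [0,∞), then c·b̂ maximizes the function b ↦ E[(c·w − S(b, c·b̂⁻))·1{b > c·b̂⁻}] over b ∈ [0,∞). Consequently, if b̂(·) is a symmetric equilibrium strategy of the standard (unconstrained) auction with payment rule S, then for any c > 0 the scaled strategy c·b̂(·) is a symmetric best reply against competitors using c·b̂(·) in the Lagrangian-relaxed problem. -/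
/-!
The realized utility `(w − S(b, p))·1{p < b}` is positively homogeneous of degree one in
`(w, b, p)`, so scaling value and competing bid by `c > 0` scales the expected utility of the
bid `c·b` by `c`; as `b ↦ c·b` maps `[0, ∞)` onto itself, maximizers scale along.
-/

open MeasureTheory ProbabilityTheory Set

/-- The payment rule `S(b, b⁻)`: own bid `b`, highest competing bid `b⁻`. -/
def mixedPayment (κ b p : ℝ) : ℝ := (1 - κ) * b + κ * p

lemma mixedPayment_mul (κ c b p : ℝ) :
    mixedPayment κ (c * b) (c * p) = c * mixedPayment κ b p := by
  unfold mixedPayment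
  ring

noncomputable def winPayoff (κ w b p : ℝ) : ℝ := if p < b then w - mixedPayment κ b p else 0

lemma winPayoff_mul {c : ℝ} (hc : 0 < c) (κ w b p : ℝ) :
    winPayoff κ (c * w) (c * b) (c * p) = c * winPayoff κ w b p := by
  simp only [winPayoff, mul_lt_mul_iff_right₀ hc, mixedPayment_mul]
  split_ifs <;> ring

section

variable {Ω : Type*} [MeasurableSpace Ω] (μ : Measure Ω) (κ w : ℝ) (X : Ω → ℝ)

noncomputable def expectedPayoff (b : ℝ) : ℝ := ∫ ω, winPayoff κ w b (X ω) ∂μ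

lemma expectedPayoff_mul {c : ℝ} (hc : 0 < c) (b : ℝ) :
    expectedPayoff μ κ (c * w) (fun ω ↦ c * X ω) (c * b) = c * expectedPayoff μ κ w X b := by
  simp only [expectedPayoff, winPayoff_mul hc, integral_const_mul]

lemma isMaxOn_expectedPayoff_mul {c : ℝ} (hc : 0 < c) {bhat : ℝ}
    (h : IsMaxOn (expectedPayoff μ κ w X) (Ici 0) bhat) :
    IsMaxOn (expectedPayoff μ κ (c * w) (fun ω ↦ c * X ω)) (Ici 0) (c * bhat) := by
  intro b (hb : 0 ≤ b)
  have hbc : b = c * (b / c) := by field_simp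
  show expectedPayoff _ _ _ _ b ≤ _
  rw [hbc, expectedPayoff_mul μ κ w X hc, expectedPayoff_mul μ κ w X hc]
  exact mul_le_mul_of_nonneg_left (h (div_nonneg hb hc.le)) hc.le

end

theorem mixed_auction_scaling_general
    {Ω : Type*} [MeasureSpace Ω]
    (κ : ℝ)
    (bm : Ω → ℝ)
    (w c : ℝ) (hc : 0 < c)
    (bhat : ℝ)
    (hmax : ∀ b : ℝ, 0 ≤ b →
      (∫ ω, (if bm ω < b then w - ((1 - κ) * b + κ * bm ω) else 0) ∂ℙ)
        ≤ ∫ ω, (if bm ω < bhat then w - ((1 - κ) * bhat + κ * bm ω) else 0) ∂ℙ) :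
    ∀ b : ℝ, 0 ≤ b →
      (∫ ω, (if c * bm ω < b
          then c * w - ((1 - κ) * b + κ * (c * bm ω)) else 0) ∂ℙ)
        ≤ ∫ ω, (if c * bm ω < c * bhat
            then c * w - ((1 - κ) * (c * bhat) + κ * (c * bm ω)) else 0) ∂ℙ :=
  isMaxOn_iff.mp <| isMaxOn_expectedPayoff_mul ℙ κ w bm hc <|
    (isMaxOn_iff.mpr hmax : IsMaxOn (expectedPayoff ℙ κ w bm) (Ici 0) bhat)

/-- **Scaling lemma for mixed first/second price auctions.**  With payment rule
`S(b, b⁻) = (1−κ)·b + κ·b⁻` (positively homogeneous of degree one), if the bid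
`b̂` maximizes `b ↦ E[(w − S(b, b̂⁻))·1{b > b̂⁻}]` over `b ∈ [0,∞)` against the
nonnegative random price to beat `b̂⁻`, then for any `c > 0` the scaled bid
`c·b̂` maximizes `b ↦ E[(c·w − S(b, c·b̂⁻))·1{b > c·b̂⁻}]` over `b ∈ [0,∞)`.
Consequently a symmetric equilibrium strategy of the standard auction scales to
a symmetric best reply in the Lagrangian-relaxed CPA-constrained auction. -/
theorem mixed_auction_scaling
    {Ω : Type*} [MeasureSpace Ω] [IsProbabilityMeasure (ℙ : Measure Ω)]
    (κ : ℝ) (hκ : κ ∈ Icc (0:ℝ) 1)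
    (bm : Ω → ℝ) (hbm : Measurable bm) (hbm0 : ∀ ω, 0 ≤ bm ω)
    (w c : ℝ) (hw : 0 ≤ w) (hc : 0 < c)
    (bhat : ℝ) (hbhat0 : 0 ≤ bhat)
    (hmax : ∀ b : ℝ, 0 ≤ b →
      (∫ ω, (if bm ω < b then w - ((1 - κ) * b + κ * bm ω) else 0) ∂ℙ)
        ≤ ∫ ω, (if bm ω < bhat then w - ((1 - κ) * bhat + κ * bm ω) else 0) ∂ℙ) :
    ∀ b : ℝ, 0 ≤ b →
      (∫ ω, (if c * bm ω < b
          then c * w - ((1 - κ) * b + κ * (c * bm ω)) else 0) ∂ℙ)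
        ≤ ∫ ω, (if c * bm ω < c * bhat
            then c * w - ((1 - κ) * (c * bhat) + κ * (c * bm ω)) else 0) ∂ℙ :=
  mixed_auction_scaling_general κ bm w c hc bhat hmax
end

section
/- Let a > 0 and let v₁, v₂ be i.i.d. random variables on [0,1] with cumulative distribution F(t) = tᵃ. For bid multipliers 0 < α ≤ β, bidder 1 bids α·v₁ and bidder 2 bids β·v₂ in a second price auction, so bidder 1 wins when α·v₁ > β·v₂ and then pays β·v₂. Then bidder 1's CPA, the ratio E[β·v₂·1{α·v₁ > β·v₂}] / E[v₁·1{α·v₁ > β·v₂}], equals (a/(a+1))·α and in particular does not depend on bidder 2's multiplier β. -/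
/-!
Fix bidder 1's value `x`. Bidder 1 wins exactly when `v₂ < s := α x / β`, and `s ≤ 1`
because `α ≤ β`. For the power law `F(t) = tᵃ` the mean of `v₂` on `{v₂ < s}` is a fixed
fraction of the threshold: `E[v₂; v₂ < s] = a / (a + 1) · s · F(s)`. So the conditional
payment `β E[v₂; v₂ < s]` is `a / (a + 1) · α · x F(s)`, i.e. `a / (a + 1) · α` times the
conditional earned value, whatever `β` is. Independence turns both expectations into iterated
integrals against the law of the values, and integrating over `x` gives the claim.
-/

open MeasureTheory ProbabilityTheory Set

noncomputable def powerLaw (a : ℝ) : Measure ℝ :=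
  (volume.restrict (Ioc 0 1)).withDensity fun y => ENNReal.ofReal (a * y ^ (a - 1))

section PowerLaw

variable {a : ℝ}

instance : NullSingletonClass (powerLaw a) :=
  ⟨fun _ => withDensity_absolutelyContinuous _ _ (measure_singleton _)⟩

lemma ae_mem_Ioc_powerLaw : ∀ᵐ y ∂powerLaw a, y ∈ Ioc 0 1 :=
  (withDensity_absolutelyContinuous _ _).ae_le (ae_restrict_mem measurableSet_Ioc)

lemma isFiniteMeasure_powerLaw (ha : 0 < a) : IsFiniteMeasure (powerLaw a) := by
  refine isFiniteMeasure_withDensity_ofReal (Integrable.hasFiniteIntegral ?_)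
  have := (intervalIntegral.intervalIntegrable_rpow' (a := 0) (b := 1) (r := a - 1)
    (by linarith)).const_mul a
  rwa [intervalIntegrable_iff_integrableOn_Ioc_of_le zero_le_one] at this

lemma integral_powerLaw (ha : 0 ≤ a) (g : ℝ → ℝ) :
    ∫ y, g y ∂powerLaw a = ∫ y in Ioc 0 1, a * y ^ (a - 1) * g y := by
  rw [powerLaw, integral_withDensity_eq_integral_toReal_smul (by fun_prop)
    (ae_of_all _ fun _ => ENNReal.ofReal_lt_top)]
  refine setIntegral_congr_fun measurableSet_Ioc fun y hy => ?_
  have := Real.rpow_nonneg hy.1.le (a - 1)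
  rw [ENNReal.toReal_ofReal (by positivity), smul_eq_mul]

lemma setIntegral_powerLaw_Iic_rpow (ha : 0 ≤ a) {p : ℝ} (hp : -a < p) {s : ℝ}
    (hs : 0 ≤ s) :
    ∫ y in Iic s, y ^ p ∂powerLaw a = a / (a + p) * min s 1 ^ (a + p) := by
  have hdens : ∀ y ∈ Ioc (0 : ℝ) 1, a * y ^ (a - 1) * (Iic s).indicator (· ^ p) y
      = (Iic s).indicator (fun y => a * y ^ (a - 1 + p)) y := by
    intro y hy
    rw [indicator_apply, indicator_apply]
    split_ifs
    · rw [Real.rpow_add hy.1]; ring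
    · rw [mul_zero]
  rw [← integral_indicator measurableSet_Iic, integral_powerLaw ha,
    setIntegral_congr_fun measurableSet_Ioc hdens, setIntegral_indicator measurableSet_Iic,
    Ioc_inter_Iic, min_comm, ← intervalIntegral.integral_of_le (le_min hs zero_le_one),
    intervalIntegral.integral_const_mul, integral_rpow (Or.inl (by linarith)),
    show a - 1 + p + 1 = a + p by ring, Real.zero_rpow (by linarith)]
  ring

lemma measureReal_powerLaw_Iic (ha : 0 < a) {s : ℝ} (hs : 0 ≤ s) :
    (powerLaw a).real (Iic s) = min s 1 ^ a := by
  simpa [ha.ne'] using setIntegral_powerLaw_Iic_rpow ha.le (neg_lt_zero.2 ha) hs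

lemma powerLaw_Iic (ha : 0 < a) {s : ℝ} (hs : 0 ≤ s) :
    powerLaw a (Iic s) = ENNReal.ofReal (min s 1 ^ a) := by
  have := isFiniteMeasure_powerLaw ha
  rw [← measureReal_powerLaw_Iic ha hs, ofReal_measureReal]

lemma measureReal_powerLaw_Iio (ha : 0 < a) {s : ℝ} (hs₀ : 0 ≤ s) (hs₁ : s ≤ 1) :
    (powerLaw a).real (Iio s) = s ^ a := by
  rw [measureReal_congr Iio_ae_eq_Iic, measureReal_powerLaw_Iic ha hs₀, min_eq_left hs₁]

lemma integral_powerLaw_rpow (ha : 0 ≤ a) {p : ℝ} (hp : -a < p) :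
    ∫ y, y ^ p ∂powerLaw a = a / (a + p) := by
  have h_le_one : ∀ᵐ y ∂powerLaw a, y ∈ Iic 1 := ae_mem_Ioc_powerLaw.mono fun _ hy => hy.2
  rw [← Measure.restrict_eq_self_of_ae_mem h_le_one,
    setIntegral_powerLaw_Iic_rpow ha hp zero_le_one, min_self, Real.one_rpow, mul_one]

lemma setIntegral_powerLaw_Iio_id (ha : 0 < a) {s : ℝ} (hs₀ : 0 ≤ s) (hs₁ : s ≤ 1) :
    ∫ y in Iio s, y ∂powerLaw a = a / (a + 1) * s * (powerLaw a).real (Iio s) := by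
  have h := setIntegral_powerLaw_Iic_rpow ha.le (p := 1) (by linarith) hs₀
  simp only [Real.rpow_one, min_eq_left hs₁] at h
  rw [← integral_Iic_eq_integral_Iio, h, measureReal_powerLaw_Iio ha hs₀ hs₁,
    Real.rpow_add' hs₀ (by linarith), Real.rpow_one]
  ring

end PowerLaw

lemma map_eq_powerLaw {Ω : Type*} [MeasurableSpace Ω] {μ : Measure Ω} [IsProbabilityMeasure μ]
    {a : ℝ} (ha : 0 < a) {v : Ω → ℝ} (hv : Measurable v)
    (hv₀₁ : ∀ ω, v ω ∈ Icc (0 : ℝ) 1)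
    (hcdf : ∀ t ∈ Icc (0 : ℝ) 1, (μ {ω | v ω ≤ t}).toReal = t ^ a) :
    μ.map v = powerLaw a := by
  refine Measure.ext_of_Iic _ _ fun t => ?_
  rw [Measure.map_apply hv measurableSet_Iic]
  rcases lt_or_ge t 0 with ht | ht
  · have hv_t : v ⁻¹' Iic t = ∅ :=
      eq_empty_of_forall_notMem fun ω hω => (ht.trans_le (hv₀₁ ω).1).not_ge hω
    rw [hv_t, measure_empty, eq_comm, measure_eq_zero_iff_ae_notMem]
    exact ae_mem_Ioc_powerLaw.mono fun y hy hyt => (ht.trans hy.1).not_ge hyt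
  · have hv_t : v ⁻¹' Iic t = {ω | v ω ≤ min t 1} := by
      ext ω; simp [(hv₀₁ ω).2]
    rw [hv_t, powerLaw_Iic ha ht, ← hcdf _ ⟨le_min ht zero_le_one, min_le_right _ _⟩,
      ENNReal.ofReal_toReal (measure_ne_top _ _)]

lemma ProbabilityTheory.IndepFun.integral_comp_eq_integral_integral {Ω S T E : Type*}
    [MeasurableSpace Ω] [MeasurableSpace S] [MeasurableSpace T] [NormedAddCommGroup E]
    [NormedSpace ℝ E] {μ : Measure Ω} [IsFiniteMeasure μ] {X : Ω → S} {Y : Ω → T}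
    (hX : Measurable X) (hY : Measurable Y) (hXY : IndepFun X Y μ) {f : S × T → E}
    (hf : StronglyMeasurable f) (hfi : Integrable (fun ω => f (X ω, Y ω)) μ) :
    ∫ ω, f (X ω, Y ω) ∂μ = ∫ x, ∫ y, f (x, y) ∂μ.map Y ∂μ.map X := by
  have hmap := (indepFun_iff_map_prod_eq_prod_map_map hX.aemeasurable hY.aemeasurable).1 hXY
  have hXY' : AEMeasurable (fun ω => (X ω, Y ω)) μ := (hX.prodMk hY).aemeasurable
  have hfi' := (integrable_map_measure hf.aestronglyMeasurable hXY').2 hfi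
  rw [← integral_prod _ (hmap ▸ hfi'), ← hmap, integral_map hXY' hf.aestronglyMeasurable]

noncomputable def payment (α β : ℝ) (v : ℝ × ℝ) : ℝ :=
  if β * v.2 < α * v.1 then β * v.2 else 0

noncomputable def earnedValue (α β : ℝ) (v : ℝ × ℝ) : ℝ :=
  if β * v.2 < α * v.1 then v.1 else 0

section SecondPrice

variable {α β : ℝ}

lemma measurable_payment : Measurable (payment α β) :=
  Measurable.ite (measurableSet_lt (by fun_prop) (by fun_prop)) (by fun_prop) measurable_const

lemma measurable_earnedValue : Measurable (earnedValue α β) :=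
  Measurable.ite (measurableSet_lt (by fun_prop) (by fun_prop)) measurable_fst measurable_const

lemma abs_payment_le (hβ : 0 ≤ β) {v : ℝ × ℝ} (hv : v.2 ∈ Icc (0 : ℝ) 1) :
    |payment α β v| ≤ β := by
  unfold payment
  split_ifs
  · rw [abs_of_nonneg (mul_nonneg hβ hv.1)]
    exact mul_le_of_le_one_right hβ hv.2
  · simpa using hβ

lemma abs_earnedValue_le {v : ℝ × ℝ} (hv : v.1 ∈ Icc (0 : ℝ) 1) :
    |earnedValue α β v| ≤ 1 := by
  unfold earnedValue
  split_ifs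
  · exact (abs_of_nonneg hv.1).trans_le hv.2
  · simp

lemma indicator_Iio_eq_ite (hβ : 0 < β) (x : ℝ) (f : ℝ → ℝ) :
    (Iio (α * x / β)).indicator f = fun y => if β * y < α * x then f y else 0 := by
  ext y
  exact if_congr (by rw [mem_Iio, lt_div_iff₀ hβ, mul_comm y]) rfl rfl

variable {a : ℝ} (ha : 0 < a) (hα : 0 < α) (hαβ : α ≤ β)
include ha hα hαβ

lemma integral_earnedValue_powerLaw {x : ℝ} (hx : x ∈ Icc (0 : ℝ) 1) :
    ∫ y, earnedValue α β (x, y) ∂powerLaw a = (α / β) ^ a * x ^ (a + 1) := by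
  have hβ := hα.trans_le hαβ
  have hs₁ : α * x / β ≤ 1 := by
    rw [div_le_one hβ]; nlinarith [hx.1, hx.2]
  simp only [earnedValue]
  rw [← indicator_Iio_eq_ite hβ x, integral_indicator_const _ measurableSet_Iio,
    measureReal_powerLaw_Iio ha (by have := hx.1; positivity) hs₁, smul_eq_mul,
    mul_div_right_comm, Real.mul_rpow (by positivity) hx.1,
    Real.rpow_add' hx.1 (by linarith), Real.rpow_one, mul_assoc]

lemma integral_payment_powerLaw {x : ℝ} (hx : x ∈ Icc (0 : ℝ) 1) :
    ∫ y, payment α β (x, y) ∂powerLaw a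
      = a / (a + 1) * α * ∫ y, earnedValue α β (x, y) ∂powerLaw a := by
  have hβ := hα.trans_le hαβ
  have hs₁ : α * x / β ≤ 1 := by
    rw [div_le_one hβ]; nlinarith [hx.1, hx.2]
  simp only [payment, earnedValue]
  rw [← indicator_Iio_eq_ite hβ x, ← indicator_Iio_eq_ite hβ x,
    integral_indicator_const _ measurableSet_Iio, integral_indicator measurableSet_Iio,
    integral_const_mul, setIntegral_powerLaw_Iio_id ha (by have := hx.1; positivity) hs₁,
    smul_eq_mul]
  field_simp

lemma integral_integral_earnedValue_powerLaw :
    ∫ x, ∫ y, earnedValue α β (x, y) ∂powerLaw a ∂powerLaw a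
      = (α / β) ^ a * (a / (2 * a + 1)) := by
  rw [integral_congr_ae (ae_mem_Ioc_powerLaw.mono fun x hx =>
      integral_earnedValue_powerLaw ha hα hαβ (Ioc_subset_Icc_self hx)),
    integral_const_mul, integral_powerLaw_rpow ha.le (by linarith),
    show a + (a + 1) = 2 * a + 1 by ring]

lemma integral_integral_payment_powerLaw :
    ∫ x, ∫ y, payment α β (x, y) ∂powerLaw a ∂powerLaw a
      = a / (a + 1) * α * ∫ x, ∫ y, earnedValue α β (x, y) ∂powerLaw a ∂powerLaw a := by
  rw [← integral_const_mul]
  exact integral_congr_ae (ae_mem_Ioc_powerLaw.mono fun x hx =>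
    integral_payment_powerLaw ha hα hαβ (Ioc_subset_Icc_self hx))

end SecondPrice

/-- **Strategic independence of the CPA in the two-bidder power-law case.**
With two independent values distributed with c.d.f. `F(t) = tᵃ` on `[0,1]`
(`a > 0`), bidder 1 bidding `α·v₁` and bidder 2 bidding `β·v₂`
(`0 < α ≤ β`) in a second price auction, bidder 1's CPA — the ratio
`E[β·v₂·1{α·v₁ > β·v₂}] / E[v₁·1{α·v₁ > β·v₂}]` of expected payment to
expected earned value — equals `(a/(a+1))·α`, independently of `β`. -/
theorem power_law_two_bidders_cpa
    {Ω : Type*} [MeasureSpace Ω] [IsProbabilityMeasure (ℙ : Measure Ω)]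
    (a : ℝ) (ha : 0 < a)
    (v₁ v₂ : Ω → ℝ) (h1 : Measurable v₁) (h2 : Measurable v₂)
    (hindep : IndepFun v₁ v₂ ℙ)
    (hr1 : ∀ ω, v₁ ω ∈ Icc (0:ℝ) 1) (hr2 : ∀ ω, v₂ ω ∈ Icc (0:ℝ) 1)
    (hcdf1 : ∀ t ∈ Icc (0:ℝ) 1, (ℙ {ω | v₁ ω ≤ t}).toReal = t ^ a)
    (hcdf2 : ∀ t ∈ Icc (0:ℝ) 1, (ℙ {ω | v₂ ω ≤ t}).toReal = t ^ a)
    (α β : ℝ) (hα : 0 < α) (hαβ : α ≤ β) :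
    (∫ ω, (if β * v₂ ω < α * v₁ ω then β * v₂ ω else 0) ∂ℙ)
        / (∫ ω, (if β * v₂ ω < α * v₁ ω then v₁ ω else 0) ∂ℙ)
      = (a / (a + 1)) * α := by
  change (∫ ω, payment α β (v₁ ω, v₂ ω)) / (∫ ω, earnedValue α β (v₁ ω, v₂ ω))
    = _
  have hβ := hα.trans_le hαβ
  have hv := h1.prodMk h2
  have hpay : Integrable (fun ω => payment α β (v₁ ω, v₂ ω)) :=
    .of_bound (measurable_payment.comp hv).aestronglyMeasurable β
      (ae_of_all _ fun ω => abs_payment_le hβ.le (hr2 ω))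
  have hval : Integrable (fun ω => earnedValue α β (v₁ ω, v₂ ω)) :=
    .of_bound (measurable_earnedValue.comp hv).aestronglyMeasurable 1
      (ae_of_all _ fun ω => abs_earnedValue_le (hr1 ω))
  rw [hindep.integral_comp_eq_integral_integral h1 h2 measurable_payment.stronglyMeasurable hpay,
    hindep.integral_comp_eq_integral_integral h1 h2 measurable_earnedValue.stronglyMeasurable hval,
    map_eq_powerLaw ha h1 hr1 hcdf1, map_eq_powerLaw ha h2 hr2 hcdf2,
    integral_integral_payment_powerLaw ha hα hαβ,
    integral_integral_earnedValue_powerLaw ha hα hαβ,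
    mul_div_cancel_right₀ _ (by positivity)]
end
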